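/- (Noncommutative C-Toda lattice.) Fix n ≥ 1 and assume that for all t the matrices V_n(t), V_{n+1}(t) and H_n(t) are invertible, with a_n = −V_{n+1} V_n^{-1}. Then the quantities a_n, H_n, ξ_{n,n−1}, ξ_{n+1,n} satisfy, for all t ∈ ℝ: (i) a_n · ∂_t H_n = (∂_t ξ_{n+1,n}) · H_n; (ii) ∂_t H_{n+1} = a_n · H_n · ∂_t (ξ_{n+1,n}^T); (iii) ∂_t H_n = (ξ_{n,n−1} − ξ_{n+1,n}) H_n + H_n (ξ_{n,n−1} − ξ_{n+1,n})^T. -/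

import Mathlib

open Matrix

attribute [local instance] Matrix.normedAddCommGroup Matrix.normedSpace

noncomputable section

/-- `M_p`: real `p × p` matrices. -/
abbrev Mp (p : ℕ) := Matrix (Fin p) (Fin p) ℝ

/-- The block moment matrix `M_n(t) = (m_{i,j}(t))_{0 ≤ i,j ≤ n−1}`, an `np × np` real matrix. -/
def blockM {p : ℕ} (m : ℕ → ℕ → ℝ → Mp p) (n : ℕ) (t : ℝ) :
    Matrix (Fin n × Fin p) (Fin n × Fin p) ℝ :=
  Matrix.of fun a b => m a.1 b.1 t a.2 b.2

/-- The row of moments `(m_{n,0}(t), …, m_{n,n−1}(t))`, a `p × np` matrix. -/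
def rowm {p : ℕ} (m : ℕ → ℕ → ℝ → Mp p) (n : ℕ) (t : ℝ) : Matrix (Fin p) (Fin n × Fin p) ℝ :=
  Matrix.of fun a b => m n b.1 t a b.2

/-- `ξ_{n,i}(t)`, defined by `(ξ_{n,0},…,ξ_{n,n−1}) = −(m_{n,0},…,m_{n,n−1}) M_n⁻¹` pointwise in `t`. -/
def xiD {p : ℕ} (m : ℕ → ℕ → ℝ → Mp p) (n : ℕ) (i : Fin n) (t : ℝ) : Mp p :=
  Matrix.of fun a b => ((-(rowm m n t)) * (blockM m n t)⁻¹) a (i, b)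

/-- `H_n(t) = m_{n,n}(t) + Σ_{i=0}^{n−1} ξ_{n,i}(t) m_{i,n}(t)`. -/
def HmatD {p : ℕ} (m : ℕ → ℕ → ℝ → Mp p) (n : ℕ) (t : ℝ) : Mp p :=
  m n n t + ∑ i : Fin n, xiD m n i t * m i n t

/-- `V_n(t) = φ_n(t) + Σ_{i=0}^{n−1} ξ_{n,i}(t) φ_i(t)`. -/
def VD {p : ℕ} (m : ℕ → ℕ → ℝ → Mp p) (φ : ℕ → ℝ → Mp p) (n : ℕ) (t : ℝ) : Mp p :=
  φ n t + ∑ i : Fin n, xiD m n i t * φ i t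

/-- `a_n(t) = −V_{n+1}(t) V_n(t)⁻¹`. -/
def aD {p : ℕ} (m : ℕ → ℕ → ℝ → Mp p) (φ : ℕ → ℝ → Mp p) (n : ℕ) (t : ℝ) : Mp p :=
  -(VD m φ (n + 1) t * (VD m φ n t)⁻¹)

/-- `P_n(t,x) = x^n I + Σ_{i=0}^{n−1} ξ_{n,i}(t) x^i`. -/
def Ppol {p : ℕ} (m : ℕ → ℕ → ℝ → Mp p) (n : ℕ) (t : ℝ) (x : ℝ) : Mp p :=
  x ^ n • (1 : Mp p) + ∑ i : Fin n, x ^ (i : ℕ) • xiD m n i t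

/-!
Read `m i j` as the Gram matrix `⟨xⁱ, xʲ⟩` of a matrix-valued form on matrix polynomials,
extended by `⟨A xⁱ, B xʲ⟩ = A mᵢⱼ Bᵀ`. Then `P_N = x^N + Σ ξ_{N,i} xⁱ` is orthogonal to every
lower power of `x`, so `⟨P_N, P_M⟩` is `0` for `N ≠ M` and `H_N` for `N = M`. The moment
relations make `d/dt ⟨A, B⟩ = ⟨xA, B⟩ + ⟨A, xB⟩` for constant `A, B`, and
`⟨xP_N, P_M⟩ + ⟨P_N, xP_M⟩ = V_N W_M` with `W_M = φ_M + Σ φ_i ξ_{M,i}ᵀ`. Since `∂_t P_N` has degree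
`< N`, differentiating `⟨P_N, P_N⟩ = H_N`, `⟨P_{N+1}, P_N⟩ = 0` and `⟨P_N, P_{N+1}⟩ = 0` gives
`∂_t H_N = V_N W_N`, `(∂_t ξ_{N+1,N}) H_N = -V_{N+1} W_N` and `H_N (∂_t ξ_{N+1,N})ᵀ = -V_N W_{N+1}`,
and (i), (ii) follow by multiplying with `a_N = -V_{N+1} V_N⁻¹`. For (iii), `∂_t H_N` is also
`⟨xP_N, P_N⟩ + ⟨P_N, xP_N⟩`, where `⟨P_N, xP_N⟩ = H_N (ξ_{N,N-1} - ξ_{N+1,N})ᵀ` because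
`⟨P_N, x^{N+1}⟩ = -H_N ξ_{N+1,N}ᵀ` by orthogonality of `P_N` and `P_{N+1}`.
-/

section Pairing

variable {n R : Type*} [Fintype n] [CommSemiring R]

-- `a : Fin K → Matrix n n R` stands for the polynomial `Σ aᵢ xⁱ`, and `μ i j` for `⟨xⁱ, xʲ⟩`.
def pairMonomial (μ : ℕ → ℕ → Matrix n n R) {K : ℕ} (a : Fin K → Matrix n n R) (k : ℕ) :
    Matrix n n R :=
  ∑ i, a i * μ i k

def pairing (μ : ℕ → ℕ → Matrix n n R) {K L : ℕ} (a : Fin K → Matrix n n R)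
    (b : Fin L → Matrix n n R) : Matrix n n R :=
  ∑ i : Fin K, ∑ j : Fin L, a i * μ i j * (b j)ᵀ

variable (μ : ℕ → ℕ → Matrix n n R) {K L : ℕ} (a : Fin K → Matrix n n R)
  (b : Fin L → Matrix n n R)

theorem pairing_eq_sum_pairMonomial : pairing μ a b = ∑ j : Fin L, pairMonomial μ a j * (b j)ᵀ := by
  simp only [pairing, pairMonomial, Finset.sum_mul]
  exact Finset.sum_comm

theorem transpose_pairing : (pairing μ a b)ᵀ = pairing (fun i j => (μ j i)ᵀ) b a := by
  simp only [pairing, transpose_sum, transpose_mul, transpose_transpose, mul_assoc]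
  exact Finset.sum_comm

theorem pairing_shift_eq_sum_pairMonomial :
    pairing (fun i j => μ i (j + 1)) a b = ∑ j : Fin L, pairMonomial μ a (j + 1) * (b j)ᵀ :=
  pairing_eq_sum_pairMonomial _ a b

theorem pairing_add (ν : ℕ → ℕ → Matrix n n R) :
    pairing (fun i j => μ i j + ν i j) a b = pairing μ a b + pairing ν a b := by
  simp only [pairing, mul_add, add_mul, Finset.sum_add_distrib]

theorem pairing_mul_moments (φ : ℕ → Matrix n n R) :
    pairing (fun i j => φ i * φ j) a b = (∑ i : Fin K, a i * φ i) * ∑ j : Fin L, φ j * (b j)ᵀ := by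
  simp only [pairing, Finset.sum_mul_sum, mul_assoc]

theorem pairing_snoc_zero_left :
    pairing μ (Fin.snoc a 0 : Fin (K + 1) → Matrix n n R) b = pairing μ a b := by
  simp [pairing, Fin.sum_univ_castSucc]

theorem pairing_snoc_right (x : Matrix n n R) :
    pairing μ a (Fin.snoc b x : Fin (L + 1) → Matrix n n R)
      = pairing μ a b + pairMonomial μ a L * xᵀ := by
  simp [pairing_eq_sum_pairMonomial, Fin.sum_univ_castSucc]

end Pairing

section Calculus

variable {ι κ ν : Type*} [Fintype κ] {t : ℝ}

theorem hasDerivAt_matrix_iff {A : ℝ → Matrix ι κ ℝ} {A' : Matrix ι κ ℝ} :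
    HasDerivAt A A' t ↔ ∀ i j, HasDerivAt (fun s => A s i j) (A' i j) t :=
  hasDerivAt_pi.trans (forall_congr' fun _ => hasDerivAt_pi)

theorem differentiableAt_matrix_iff {A : ℝ → Matrix ι κ ℝ} :
    DifferentiableAt ℝ A t ↔ ∀ i j, DifferentiableAt ℝ (fun s => A s i j) t :=
  differentiableAt_pi.trans (forall_congr' fun _ => differentiableAt_pi)

theorem HasDerivAt.matrix_mul [Fintype ι] [Fintype ν] {A : ℝ → Matrix ι κ ℝ}
    {B : ℝ → Matrix κ ν ℝ} {A' : Matrix ι κ ℝ} {B' : Matrix κ ν ℝ} (hA : HasDerivAt A A' t)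
    (hB : HasDerivAt B B' t) :
    HasDerivAt (fun s => A s * B s) (A' * B t + A t * B') t := by
  rw [hasDerivAt_matrix_iff] at hA hB ⊢
  intro i k
  simp only [mul_apply, Matrix.add_apply, ← Finset.sum_add_distrib]
  exact HasDerivAt.fun_sum fun j _ => (hA i j).fun_mul (hB j k)

theorem DifferentiableAt.matrix_mul [Fintype ι] [Fintype ν] {A : ℝ → Matrix ι κ ℝ}
    {B : ℝ → Matrix κ ν ℝ} (hA : DifferentiableAt ℝ A t) (hB : DifferentiableAt ℝ B t) :
    DifferentiableAt ℝ (fun s => A s * B s) t :=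
  (hA.hasDerivAt.matrix_mul hB.hasDerivAt).differentiableAt

theorem HasDerivAt.matrix_transpose [Fintype ι] {A : ℝ → Matrix ι κ ℝ} {A' : Matrix ι κ ℝ}
    (hA : HasDerivAt A A' t) : HasDerivAt (fun s => (A s)ᵀ) A'ᵀ t :=
  hasDerivAt_matrix_iff.2 fun i j => hasDerivAt_matrix_iff.1 hA j i

theorem DifferentiableAt.matrix_det [Fintype ι] [DecidableEq ι] {A : ℝ → Matrix ι ι ℝ}
    (hA : DifferentiableAt ℝ A t) : DifferentiableAt ℝ (fun s => (A s).det) t := by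
  have hA' := differentiableAt_matrix_iff.1 hA
  simp only [det_apply, Units.smul_def, zsmul_eq_mul]
  exact DifferentiableAt.fun_sum fun σ _ =>
    (DifferentiableAt.fun_finsetProd fun i _ => hA' (σ i) i).const_mul _

theorem DifferentiableAt.matrix_inv [Fintype ι] [DecidableEq ι] {A : ℝ → Matrix ι ι ℝ}
    (hA : DifferentiableAt ℝ A t) (hdet : IsUnit (A t).det) :
    DifferentiableAt ℝ (fun s => (A s)⁻¹) t := by
  have hadj : DifferentiableAt ℝ (fun s => (A s).adjugate) t := by
    refine differentiableAt_matrix_iff.2 fun i j => ?_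
    simp only [adjugate_apply]
    refine DifferentiableAt.matrix_det (differentiableAt_matrix_iff.2 fun a b => ?_)
    by_cases h : a = j
    · simp [h]
    · simpa [h] using differentiableAt_matrix_iff.1 hA a b
  simp only [inv_def, Ring.inverse_eq_inv']
  exact (hA.matrix_det.inv hdet.ne_zero).smul hadj

theorem HasDerivAt.pairing [Fintype ι] {K L : ℕ} {μ : ℝ → ℕ → ℕ → Matrix ι ι ℝ}
    {μ' : ℕ → ℕ → Matrix ι ι ℝ} {a : ℝ → Fin K → Matrix ι ι ℝ} {a' : Fin K → Matrix ι ι ℝ}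
    {b : ℝ → Fin L → Matrix ι ι ℝ} {b' : Fin L → Matrix ι ι ℝ}
    (hμ : ∀ i j, HasDerivAt (fun s => μ s i j) (μ' i j) t)
    (ha : ∀ i, HasDerivAt (fun s => a s i) (a' i) t)
    (hb : ∀ j, HasDerivAt (fun s => b s j) (b' j) t) :
    HasDerivAt (fun s => pairing (μ s) (a s) (b s))
      (pairing μ' (a t) (b t) + pairing (μ t) a' (b t) + pairing (μ t) (a t) b') t := by
  have h := HasDerivAt.fun_sum (u := (Finset.univ : Finset (Fin K))) fun i _ =>
    HasDerivAt.fun_sum (u := (Finset.univ : Finset (Fin L))) fun j _ =>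
    ((ha i).matrix_mul (hμ i j)).matrix_mul (hb j).matrix_transpose
  refine h.congr_deriv ?_
  simp only [_root_.pairing, add_mul, Finset.sum_add_distrib]
  abel

end Calculus

section Moments

variable {p : ℕ} (m : ℕ → ℕ → ℝ → Mp p)

def coeffPpol (N : ℕ) (t : ℝ) : Fin (N + 1) → Mp p :=
  Fin.snoc (fun i => xiD m N i t) 1

theorem sum_xiD_mul_eq_neg {N k : ℕ} {t : ℝ} (hM : IsUnit (blockM m N t)) (hk : k < N) :
    ∑ i : Fin N, xiD m N i t * m i k t = -m N k t := by
  have hdet := (isUnit_iff_isUnit_det _).1 hM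
  ext a b
  have h := congrFun (congrFun (nonsing_inv_mul_cancel_right (blockM m N t) (-rowm m N t) hdet) a)
    (⟨k, hk⟩, b)
  rw [mul_apply, Fintype.sum_prod_type] at h
  simpa [Matrix.sum_apply, mul_apply, xiD, blockM, rowm] using h

variable {m} (t : ℝ)

theorem pairMonomial_coeffPpol (N k : ℕ) :
    pairMonomial (m · · t) (coeffPpol m N t) k = m N k t + ∑ i : Fin N, xiD m N i t * m i k t := by
  simp [pairMonomial, coeffPpol, Fin.sum_univ_castSucc, add_comm]

theorem pairMonomial_coeffPpol_self (N : ℕ) :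
    pairMonomial (m · · t) (coeffPpol m N t) N = HmatD m N t := by
  rw [pairMonomial_coeffPpol, HmatD]

theorem pairing_eq_transpose_pairing (hsym : ∀ i j t, m i j t = (m j i t)ᵀ) {K L : ℕ}
    (a : Fin K → Mp p) (b : Fin L → Mp p) :
    pairing (m · · t) a b = (pairing (m · · t) b a)ᵀ := by
  simp only [transpose_pairing, ← hsym]

variable (hM : ∀ n t, IsUnit (blockM m n t))
include hM

theorem pairMonomial_coeffPpol_eq_zero {N k : ℕ} (hk : k < N) :
    pairMonomial (m · · t) (coeffPpol m N t) k = 0 := by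
  rw [pairMonomial_coeffPpol, sum_xiD_mul_eq_neg m (hM N t) hk, add_neg_cancel]

theorem pairing_coeffPpol_eq_zero {N L : ℕ} (hL : L ≤ N) (b : Fin L → Mp p) :
    pairing (m · · t) (coeffPpol m N t) b = 0 := by
  rw [pairing_eq_sum_pairMonomial]
  exact Finset.sum_eq_zero fun j _ => by
    rw [pairMonomial_coeffPpol_eq_zero t hM (j.isLt.trans_le hL), zero_mul]

theorem pairing_coeffPpol_eq_HmatD_mul {N : ℕ} (b : Fin (N + 1) → Mp p) :
    pairing (m · · t) (coeffPpol m N t) b = HmatD m N t * (b (Fin.last N))ᵀ := by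
  rw [pairing_eq_sum_pairMonomial, Fin.sum_univ_castSucc, Finset.sum_eq_zero, zero_add]
  · rw [Fin.val_last, pairMonomial_coeffPpol_self]
  · intro j _
    rw [Fin.val_castSucc, pairMonomial_coeffPpol_eq_zero t hM j.isLt, zero_mul]

theorem HmatD_eq_pairing (N : ℕ) :
    HmatD m N t = pairing (m · · t) (coeffPpol m N t) (coeffPpol m N t) := by
  rw [pairing_coeffPpol_eq_HmatD_mul t hM, coeffPpol, Fin.snoc_last, transpose_one, mul_one]

variable (hsym : ∀ i j t, m i j t = (m j i t)ᵀ)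
include hsym

theorem transpose_HmatD (N : ℕ) : (HmatD m N t)ᵀ = HmatD m N t := by
  rw [HmatD_eq_pairing t hM, ← pairing_eq_transpose_pairing t hsym]

theorem pairMonomial_coeffPpol_succ (N : ℕ) :
    pairMonomial (m · · t) (coeffPpol m N t) (N + 1)
      = -(HmatD m N t * (xiD m (N + 1) (Fin.last N) t)ᵀ) := by
  have h := pairing_snoc_right (m · · t) (coeffPpol m N t) (fun i => xiD m (N + 1) i t) 1
  change pairing _ _ (coeffPpol m (N + 1) t) = _ at h
  rw [pairing_eq_transpose_pairing t hsym, pairing_coeffPpol_eq_zero t hM le_rfl, transpose_zero,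
    transpose_one, mul_one, pairing_coeffPpol_eq_HmatD_mul t hM] at h
  exact eq_neg_of_add_eq_zero_right h.symm

theorem pairing_shift_coeffPpol (N : ℕ) :
    pairing (fun i j => m i (j + 1) t) (coeffPpol m (N + 1) t) (coeffPpol m (N + 1) t)
      = HmatD m (N + 1) t
        * (xiD m (N + 1) (Fin.last N) t - xiD m (N + 2) (Fin.last (N + 1)) t)ᵀ := by
  rw [pairing_shift_eq_sum_pairMonomial (m · · t), Fin.sum_univ_castSucc, Fin.sum_univ_castSucc,
    Finset.sum_eq_zero, zero_add]
  · rw [Fin.val_castSucc, Fin.val_last, Fin.val_last, pairMonomial_coeffPpol_self,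
      pairMonomial_coeffPpol_succ t hM hsym]
    simp only [coeffPpol, Fin.snoc_last, Fin.snoc_castSucc, transpose_one, mul_one]
    rw [transpose_sub, mul_sub, sub_eq_add_neg]
  · intro j _
    rw [pairMonomial_coeffPpol_eq_zero t hM (by simp), zero_mul]

end Moments

section Derivatives

variable {p : ℕ} {m : ℕ → ℕ → ℝ → Mp p}

theorem differentiableAt_xiD {N : ℕ} {t : ℝ} (hm : ∀ i j, DifferentiableAt ℝ (m i j) t)
    (hM : IsUnit (blockM m N t)) (i : Fin N) : DifferentiableAt ℝ (xiD m N i) t := by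
  have hblock : DifferentiableAt ℝ (blockM m N) t := differentiableAt_matrix_iff.2 fun a b =>
    differentiableAt_matrix_iff.1 (hm a.1 b.1) a.2 b.2
  have hrow : DifferentiableAt ℝ (rowm m N) t := differentiableAt_matrix_iff.2 fun a b =>
    differentiableAt_matrix_iff.1 (hm N b.1) a b.2
  have hξ := hrow.neg.matrix_mul (hblock.matrix_inv ((isUnit_iff_isUnit_det _).1 hM))
  exact differentiableAt_matrix_iff.2 fun a b => differentiableAt_matrix_iff.1 hξ a (i, b)

theorem hasDerivAt_coeffPpol {N : ℕ} {t : ℝ} (hm : ∀ i j, DifferentiableAt ℝ (m i j) t)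
    (hM : IsUnit (blockM m N t)) (i : Fin (N + 1)) :
    HasDerivAt (fun s => coeffPpol m N s i)
      ((Fin.snoc (fun j => deriv (xiD m N j) t) 0 : Fin (N + 1) → Mp p) i) t := by
  induction i using Fin.lastCases with
  | last =>
    simp only [coeffPpol, Fin.snoc_last]
    exact hasDerivAt_const t (1 : Mp p)
  | cast j =>
    simp only [coeffPpol, Fin.snoc_castSucc]
    exact (differentiableAt_xiD hm hM j).hasDerivAt

theorem hasDerivAt_pairing_coeffPpol
    (hderiv : ∀ i j t, HasDerivAt (m i j) (m (i + 1) j t + m i (j + 1) t) t)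
    (hM : ∀ n t, IsUnit (blockM m n t)) (N M : ℕ) (t : ℝ) :
    HasDerivAt (fun s => pairing (m · · s) (coeffPpol m N s) (coeffPpol m M s))
      (pairing (fun i j => m (i + 1) j t + m i (j + 1) t) (coeffPpol m N t) (coeffPpol m M t)
        + pairing (m · · t) (fun i => deriv (xiD m N i) t) (coeffPpol m M t)
        + pairing (m · · t) (coeffPpol m N t) (fun j => deriv (xiD m M j) t)) t := by
  have hm i j : DifferentiableAt ℝ (m i j) t := (hderiv i j t).differentiableAt
  have h := HasDerivAt.pairing (fun i j => hderiv i j t) (hasDerivAt_coeffPpol hm (hM N t))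
    (hasDerivAt_coeffPpol hm (hM M t))
  rwa [pairing_snoc_zero_left, pairing_snoc_right, transpose_zero, mul_zero, add_zero] at h

end Derivatives

section Toda

variable {p : ℕ} {m : ℕ → ℕ → ℝ → Mp p}

def WD (m : ℕ → ℕ → ℝ → Mp p) (φ : ℕ → ℝ → Mp p) (N : ℕ) (t : ℝ) : Mp p :=
  φ N t + ∑ i : Fin N, φ i t * (xiD m N i t)ᵀ

theorem pairing_coeffPpol_moment_deriv {φ : ℕ → ℝ → Mp p}
    (hphi : ∀ i j t, m (i + 1) j t + m i (j + 1) t = φ i t * φ j t) (N M : ℕ) (t : ℝ) :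
    pairing (fun i j => m (i + 1) j t + m i (j + 1) t) (coeffPpol m N t) (coeffPpol m M t)
      = VD m φ N t * WD m φ M t := by
  simp only [hphi]
  refine (pairing_mul_moments _ _ fun i => φ i t).trans ?_
  simp only [VD, WD, coeffPpol, Fin.sum_univ_castSucc, Fin.snoc_castSucc, Fin.snoc_last,
    Fin.val_castSucc, Fin.val_last, one_mul, transpose_one, mul_one, add_comm]

variable (hsym : ∀ i j t, m i j t = (m j i t)ᵀ)
  (hderiv : ∀ i j t, HasDerivAt (m i j) (m (i + 1) j t + m i (j + 1) t) t)
  (hM : ∀ n t, IsUnit (blockM m n t))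
include hsym hderiv hM

theorem hasDerivAt_HmatD (N : ℕ) (t : ℝ) :
    HasDerivAt (HmatD m N)
      (pairing (fun i j => m (i + 1) j t + m i (j + 1) t) (coeffPpol m N t) (coeffPpol m N t))
      t := by
  have h := hasDerivAt_pairing_coeffPpol hderiv hM N N t
  rw [pairing_coeffPpol_eq_zero t hM le_rfl, add_zero, pairing_eq_transpose_pairing t hsym,
    pairing_coeffPpol_eq_zero t hM le_rfl, transpose_zero, add_zero] at h
  rwa [show HmatD m N = _ from funext fun s => HmatD_eq_pairing s hM N]

theorem xiD_deriv_mul_HmatD {φ : ℕ → ℝ → Mp p}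
    (hphi : ∀ i j t, m (i + 1) j t + m i (j + 1) t = φ i t * φ j t) (N : ℕ) (t : ℝ) :
    deriv (xiD m (N + 1) (Fin.last N)) t * HmatD m N t = -(VD m φ (N + 1) t * WD m φ N t) := by
  have h := hasDerivAt_pairing_coeffPpol hderiv hM (N + 1) N t
  rw [show (fun s => pairing (m · · s) (coeffPpol m (N + 1) s) (coeffPpol m N s)) = fun _ => 0
    from funext fun s => pairing_coeffPpol_eq_zero s hM le_rfl _] at h
  have h0 := h.unique (hasDerivAt_const t 0)
  rw [pairing_coeffPpol_eq_zero t hM (N.le_add_right 1), add_zero,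
    pairing_coeffPpol_moment_deriv hphi, pairing_eq_transpose_pairing t hsym _ (coeffPpol m N t),
    pairing_coeffPpol_eq_HmatD_mul t hM, transpose_mul, transpose_transpose,
    transpose_HmatD t hM hsym] at h0
  exact eq_neg_of_add_eq_zero_right h0

theorem HmatD_mul_transpose_xiD_deriv {φ : ℕ → ℝ → Mp p}
    (hphi : ∀ i j t, m (i + 1) j t + m i (j + 1) t = φ i t * φ j t) (N : ℕ) (t : ℝ) :
    HmatD m N t * (deriv (xiD m (N + 1) (Fin.last N)) t)ᵀ = -(VD m φ N t * WD m φ (N + 1) t) := by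
  have h := hasDerivAt_pairing_coeffPpol hderiv hM N (N + 1) t
  rw [show (fun s => pairing (m · · s) (coeffPpol m N s) (coeffPpol m (N + 1) s)) = fun _ => 0
    from funext fun s => by
      rw [pairing_eq_transpose_pairing s hsym, pairing_coeffPpol_eq_zero s hM le_rfl,
        transpose_zero]] at h
  have h0 := h.unique (hasDerivAt_const t 0)
  rw [pairing_eq_transpose_pairing t hsym _ (coeffPpol m (N + 1) t),
    pairing_coeffPpol_eq_zero t hM (N.le_add_right 1), transpose_zero, add_zero,
    pairing_coeffPpol_moment_deriv hphi, pairing_coeffPpol_eq_HmatD_mul t hM] at h0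
  exact eq_neg_of_add_eq_zero_right h0

theorem hasDerivAt_HmatD_succ (N : ℕ) (t : ℝ) :
    HasDerivAt (HmatD m (N + 1))
      ((xiD m (N + 1) (Fin.last N) t - xiD m (N + 2) (Fin.last (N + 1)) t) * HmatD m (N + 1) t
        + HmatD m (N + 1) t
          * (xiD m (N + 1) (Fin.last N) t - xiD m (N + 2) (Fin.last (N + 1)) t)ᵀ) t := by
  refine (hasDerivAt_HmatD hsym hderiv hM (N + 1) t).congr_deriv ?_
  have hswap : pairing (fun i j => m (i + 1) j t) (coeffPpol m (N + 1) t) (coeffPpol m (N + 1) t)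
      = (pairing (fun i j => m i (j + 1) t) (coeffPpol m (N + 1) t) (coeffPpol m (N + 1) t))ᵀ := by
    rw [transpose_pairing]
    simp only [← hsym]
  rw [pairing_add, hswap, pairing_shift_coeffPpol t hM hsym, transpose_mul, transpose_transpose,
    transpose_HmatD t hM hsym]

end Toda

/-- **Noncommutative C-Toda lattice.**  Fix `n ≥ 1` and assume that for all `t` the matrices
`V_n(t)`, `V_{n+1}(t)` and `H_n(t)` are invertible, with `a_n = −V_{n+1} V_n⁻¹`.  Then for
all `t ∈ ℝ`:
(i) `a_n ∂_t H_n = (∂_t ξ_{n+1,n}) H_n`;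
(ii) `∂_t H_{n+1} = a_n H_n ∂_t (ξ_{n+1,n}ᵀ)`;
(iii) `∂_t H_n = (ξ_{n,n−1} − ξ_{n+1,n}) H_n + H_n (ξ_{n,n−1} − ξ_{n+1,n})ᵀ`. -/
theorem stmt14 {p : ℕ} (m : ℕ → ℕ → ℝ → Mp p) (φ : ℕ → ℝ → Mp p)
    (hsym : ∀ i j t, m i j t = (m j i t)ᵀ)
    (hderiv : ∀ i j t, HasDerivAt (m i j) (m (i + 1) j t + m i (j + 1) t) t)
    (hphi : ∀ i j t, m (i + 1) j t + m i (j + 1) t = φ i t * φ j t)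
    (hM : ∀ n t, IsUnit (blockM m n t))
    (n : ℕ) (hn : 1 ≤ n)
    (hV1 : ∀ t, IsUnit (VD m φ n t)) :
    ∀ t : ℝ,
      aD m φ n t * deriv (HmatD m n) t
          = deriv (xiD m (n + 1) ⟨n, by omega⟩) t * HmatD m n t ∧
      deriv (HmatD m (n + 1)) t
          = aD m φ n t * HmatD m n t * deriv (fun s => (xiD m (n + 1) ⟨n, by omega⟩ s)ᵀ) t ∧
      deriv (HmatD m n) t
          = (xiD m n ⟨n - 1, by omega⟩ t - xiD m (n + 1) ⟨n, by omega⟩ t) * HmatD m n t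
            + HmatD m n t * (xiD m n ⟨n - 1, by omega⟩ t - xiD m (n + 1) ⟨n, by omega⟩ t)ᵀ := by
  intro t
  have haV : aD m φ n t * VD m φ n t = -VD m φ (n + 1) t := by
    rw [aD, neg_mul, nonsing_inv_mul_cancel_right _ _ ((isUnit_iff_isUnit_det _).1 (hV1 t))]
  have hH : ∀ N, deriv (HmatD m N) t = VD m φ N t * WD m φ N t := fun N =>
    (hasDerivAt_HmatD hsym hderiv hM N t).deriv.trans (pairing_coeffPpol_moment_deriv hphi N N t)
  have hξT : deriv (fun s => (xiD m (n + 1) ⟨n, by omega⟩ s)ᵀ) t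
      = (deriv (xiD m (n + 1) (Fin.last n)) t)ᵀ :=
    (differentiableAt_xiD (fun i j => (hderiv i j t).differentiableAt) (hM (n + 1) t)
      (Fin.last n)).hasDerivAt.matrix_transpose.deriv
  refine ⟨?_, ?_, ?_⟩
  · rw [hH, ← mul_assoc, haV, neg_mul, ← xiD_deriv_mul_HmatD hsym hderiv hM hphi]
    rfl
  · rw [hH, hξT, mul_assoc, HmatD_mul_transpose_xiD_deriv hsym hderiv hM hphi, mul_neg,
      ← mul_assoc, haV, neg_mul, neg_neg]
  · obtain ⟨k, rfl⟩ : ∃ k, n = k + 1 := ⟨n - 1, by omega⟩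
    exact (hasDerivAt_HmatD_succ hsym hderiv hM k t).deriv
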